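/- Consider the deterministic Obizhaeva–Wang model with parameters q > 0, ρ > 0, ε ∈ [0,1], T > 0, initial price P₀ ∈ ℝ and initial position x₀ ∈ ℝ, and no external order flow (N ≡ 0, D₀ = 0). The Obizhaeva–Wang strategy holds X_t = x₀·(1 + ρ(T−t))/(2 + ρT) for t ∈ (0,T], obtained from X₀ = x₀ by an initial block trade v₀ = −x₀/(2+ρT) at time 0, continuous trading at rate ẋ = −ρx₀/(2+ρT) on (0,T), and a final block trade v_T = −x₀/(2+ρT) at time T. Along this strategy the price is P_t = S_t + D_t with S_t = P₀ + (ε/q)·(X_t − x₀) and D_t = −(1−ε)·x₀/(q(2+ρT)) constant for all t ∈ (0,T] (D jumps by ((1−ε)/q)·v at each block trade of size v and satisfies D' = −ρD + ((1−ε)/q)·ẋ in between, starting from D₀ = 0). The total execution cost P₀·v₀ + v₀²/(2q) + ∫₀ᵀ P_t·ẋ dt + P_T·v_T + v_T²/(2q) equals −P₀·x₀ + [(1−ε)/(2+ρT) + ε/2]·x₀²/q. -/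

import Mathlib

/-- The Obizhaeva–Wang position: X_t = x₀·(1 + ρ(T−t))/(2 + ρT). -/
noncomputable def owX (ρ T x₀ : ℝ) (t : ℝ) : ℝ := x₀ * (1 + ρ * (T - t)) / (2 + ρ * T)

/-- The initial and final block trades: v₀ = v_T = −x₀/(2+ρT). -/
noncomputable def owBlock (ρ T x₀ : ℝ) : ℝ := -x₀ / (2 + ρ * T)

/-- The continuous trading rate ẋ = −ρx₀/(2+ρT). -/
noncomputable def owRate (ρ T x₀ : ℝ) : ℝ := -(ρ * x₀) / (2 + ρ * T)

/-- The constant transient price deviation D_t = −(1−ε)·x₀/(q(2+ρT)) on (0,T]. -/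
noncomputable def owD (q ρ ε T x₀ : ℝ) : ℝ := -((1 - ε) * x₀) / (q * (2 + ρ * T))

/-- The fundamental price S_t = P₀ + (ε/q)·(X_t − x₀) along the OW strategy. -/
noncomputable def owS (q ρ ε T P₀ x₀ : ℝ) (t : ℝ) : ℝ := P₀ + (ε / q) * (owX ρ T x₀ t - x₀)

/-- The price P_t = S_t + D_t along the OW strategy, for t ∈ (0,T]. -/
noncomputable def owP (q ρ ε T P₀ x₀ : ℝ) (t : ℝ) : ℝ := owS q ρ ε T P₀ x₀ t + owD q ρ ε T x₀

/-!
Along the strategy the price is an affine function of the position, `P = α + (ε/q)·X`, so the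
continuous part of the cost is `∫ P dX = α·ΔX + (ε/2q)·Δ(X²)` by the fundamental theorem of
calculus. What remains is algebra in the two block trades and the boundary values
`X₀ = x₀(1+ρT)/(2+ρT)`, `X_T = x₀/(2+ρT)`.
-/

theorem intervalIntegral.integral_affine_mul_deriv {X X' : ℝ → ℝ} {a b : ℝ}
    (hX : ∀ t ∈ Set.uIcc a b, HasDerivAt X (X' t) t)
    (hX' : IntervalIntegrable X' MeasureTheory.volume a b) (α β : ℝ) :
    ∫ t in a..b, (α + β * X t) * X' t = α * (X b - X a) + β / 2 * (X b ^ 2 - X a ^ 2) := by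
  have hXc : ContinuousOn X (Set.uIcc a b) := fun t ht => (hX t ht).continuousAt.continuousWithinAt
  have hprim : ∀ t ∈ Set.uIcc a b,
      HasDerivAt (fun s => α * X s + β / 2 * X s ^ 2) ((α + β * X t) * X' t) t := by
    intro t ht
    refine (((hX t ht).const_mul α).add (((hX t ht).fun_pow 2).const_mul (β / 2))).congr_deriv ?_
    push_cast
    ring
  rw [intervalIntegral.integral_eq_sub_of_hasDerivAt hprim
    (hX'.continuousOn_mul (continuousOn_const.add (continuousOn_const.mul hXc)))]
  ring

section ObizhaevaWang

variable (q ρ ε T P₀ x₀ : ℝ)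

theorem owX_zero (h : 2 + ρ * T ≠ 0) : owX ρ T x₀ 0 = x₀ + owBlock ρ T x₀ := by
  simp only [owX, owBlock]
  field_simp
  ring

theorem hasDerivAt_owX (t : ℝ) : HasDerivAt (owX ρ T x₀) (owRate ρ T x₀) t := by
  refine ((((hasDerivAt_id' t).const_sub T).const_mul ρ).const_add 1 |>.const_mul x₀).div_const
    (2 + ρ * T) |>.congr_deriv ?_
  simp only [owRate]
  ring

theorem owX_add_owBlock : owX ρ T x₀ T + owBlock ρ T x₀ = 0 := by
  simp only [owX, owBlock]
  ring

theorem owD_eq_jump : (1 - ε) / q * owBlock ρ T x₀ = owD q ρ ε T x₀ := by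
  simp only [owBlock, owD, div_eq_mul_inv, mul_inv]
  ring

theorem owD_stationary : -ρ * owD q ρ ε T x₀ + (1 - ε) / q * owRate ρ T x₀ = 0 := by
  simp only [owD, owRate, div_eq_mul_inv, mul_inv]
  ring

theorem owP_eq_affine (t : ℝ) :
    owP q ρ ε T P₀ x₀ t = (P₀ - ε / q * x₀ + owD q ρ ε T x₀) + ε / q * owX ρ T x₀ t := by
  simp only [owP, owS]
  ring

theorem integral_owP_mul_owRate :
    ∫ t in (0:ℝ)..T, owP q ρ ε T P₀ x₀ t * owRate ρ T x₀ =
      (P₀ - ε / q * x₀ + owD q ρ ε T x₀) * (owX ρ T x₀ T - owX ρ T x₀ 0)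
        + ε / q / 2 * (owX ρ T x₀ T ^ 2 - owX ρ T x₀ 0 ^ 2) := by
  simp only [owP_eq_affine]
  exact intervalIntegral.integral_affine_mul_deriv (fun t _ => hasDerivAt_owX ρ T x₀ t)
    intervalIntegrable_const _ _

end ObizhaevaWang

theorem obizhaeva_wang_strategy_and_cost_general (q ρ ε T P₀ x₀ : ℝ)
    (hq : 0 < q) (hρ : 0 < ρ) (hT : 0 < T) :
    -- the position after the initial block trade v₀ at time 0
    owX ρ T x₀ 0 = x₀ + owBlock ρ T x₀ ∧
    -- on (0,T) the position evolves at the continuous rate ẋ = −ρx₀/(2+ρT)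
    (∀ t : ℝ, HasDerivAt (owX ρ T x₀) (owRate ρ T x₀) t) ∧
    -- the final block trade v_T closes the position
    owX ρ T x₀ T + owBlock ρ T x₀ = 0 ∧
    -- D jumps from D₀ = 0 by ((1−ε)/q)·v₀ at the initial block trade
    ((1 - ε) / q) * owBlock ρ T x₀ = owD q ρ ε T x₀ ∧
    -- the constant D solves D' = −ρD + ((1−ε)/q)·ẋ on (0,T)
    -ρ * owD q ρ ε T x₀ + ((1 - ε) / q) * owRate ρ T x₀ = 0 ∧
    -- total execution cost
    P₀ * owBlock ρ T x₀ + (owBlock ρ T x₀) ^ 2 / (2 * q)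
        + (∫ t in (0:ℝ)..T, owP q ρ ε T P₀ x₀ t * owRate ρ T x₀)
        + owP q ρ ε T P₀ x₀ T * owBlock ρ T x₀ + (owBlock ρ T x₀) ^ 2 / (2 * q)
      = -(P₀ * x₀) + ((1 - ε) / (2 + ρ * T) + ε / 2) * x₀ ^ 2 / q := by
  have hc : 2 + ρ * T ≠ 0 := by positivity
  refine ⟨owX_zero ρ T x₀ hc, hasDerivAt_owX ρ T x₀, owX_add_owBlock ρ T x₀,
    owD_eq_jump q ρ ε T x₀, owD_stationary q ρ ε T x₀, ?_⟩
  rw [integral_owP_mul_owRate, owP_eq_affine]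
  simp only [owX, owBlock, owD]
  field_simp
  ring

theorem obizhaeva_wang_strategy_and_cost (q ρ ε T P₀ x₀ : ℝ)
    (hq : 0 < q) (hρ : 0 < ρ) (hε : ε ∈ Set.Icc (0:ℝ) 1) (hT : 0 < T) :
    -- the position after the initial block trade v₀ at time 0
    owX ρ T x₀ 0 = x₀ + owBlock ρ T x₀ ∧
    -- on (0,T) the position evolves at the continuous rate ẋ = −ρx₀/(2+ρT)
    (∀ t : ℝ, HasDerivAt (owX ρ T x₀) (owRate ρ T x₀) t) ∧
    -- the final block trade v_T closes the position
    owX ρ T x₀ T + owBlock ρ T x₀ = 0 ∧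
    -- D jumps from D₀ = 0 by ((1−ε)/q)·v₀ at the initial block trade
    ((1 - ε) / q) * owBlock ρ T x₀ = owD q ρ ε T x₀ ∧
    -- the constant D solves D' = −ρD + ((1−ε)/q)·ẋ on (0,T)
    -ρ * owD q ρ ε T x₀ + ((1 - ε) / q) * owRate ρ T x₀ = 0 ∧
    -- total execution cost
    P₀ * owBlock ρ T x₀ + (owBlock ρ T x₀) ^ 2 / (2 * q)
        + (∫ t in (0:ℝ)..T, owP q ρ ε T P₀ x₀ t * owRate ρ T x₀)
        + owP q ρ ε T P₀ x₀ T * owBlock ρ T x₀ + (owBlock ρ T x₀) ^ 2 / (2 * q)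
      = -(P₀ * x₀) + ((1 - ε) / (2 + ρ * T) + ε / 2) * x₀ ^ 2 / q :=
  obizhaeva_wang_strategy_and_cost_general q ρ ε T P₀ x₀ hq hρ hT
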